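/- arXiv:2311.05835 — 9 statements merged into one kernel-verified Lean document; each statement's English description precedes it below -/
import Mathlib

section
/- Let λ1, λ2, λ3 > 0, σ1 = λ1+λ2+λ3, σ3 = λ1λ2λ3, f = σ3/σ1, and F^{ii} = f·(1/λi − 1/σ1) for i = 1,2,3. Then for i ≠ j, the quantity (σ3^{ii,jj}/σ1 − σ3^{ii}/σ1² − σ3^{jj}/σ1² + 2σ3/σ1³) equals F^{ii}F^{jj}/f + f/σ1², where σ3^{ii} = σ3/λi and σ3^{ii,jj} = σ3/(λiλj). -/
theorem second_derivative_identity (li lj lk σ1 σ3 f Fii Fjj : ℝ)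
    (hi : li > 0) (hj : lj > 0) (hk : lk > 0)
    (hσ1 : σ1 = li + lj + lk) (hσ3 : σ3 = li * lj * lk)
    (hf : f = σ3 / σ1)
    (hFii : Fii = f * (1 / li - 1 / σ1)) (hFjj : Fjj = f * (1 / lj - 1 / σ1)) :
    σ3 / (li * lj) / σ1 - (σ3 / li) / σ1 ^ 2 - (σ3 / lj) / σ1 ^ 2 + 2 * σ3 / σ1 ^ 3
      = Fii * Fjj / f + f / σ1 ^ 2 := by
  have h1 : σ1 > 0 := by rw [hσ1]; positivity
  have h3 : σ3 > 0 := by rw [hσ3]; positivity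
  have hfpos : f > 0 := by rw [hf]; positivity
  subst hFii hFjj hf hσ3 hσ1
  field_simp
  ring
end

section
/- Let λ1 ≥ λ2 ≥ λ3 > 0 with σ1 = λ1+λ2+λ3, f = λ1λ2λ3/σ1, and suppose λ2 ≤ λ1/4. Define F^{ii} = f(1/λi − 1/σ1). Then −2f³/(λ1σ1⁴(F^{22})²) + F^{11}/(λ1σ1) ≥ f³/(2λ2σ1⁴(F^{22})²). -/
theorem caseA_coefficient_estimate (l1 l2 l3 σ1 f F11 F22 : ℝ)
    (h12 : l1 ≥ l2) (h23 : l2 ≥ l3) (h3 : l3 > 0)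
    (hσ1 : σ1 = l1 + l2 + l3) (hf : f = l1 * l2 * l3 / σ1)
    (hcase : l2 ≤ l1 / 4)
    (hF11 : F11 = f * (1 / l1 - 1 / σ1)) (hF22 : F22 = f * (1 / l2 - 1 / σ1)) :
    -2 * f ^ 3 / (l1 * σ1 ^ 4 * F22 ^ 2) + F11 / (l1 * σ1)
      ≥ f ^ 3 / (2 * l2 * σ1 ^ 4 * F22 ^ 2) := by
  have hl2 : l2 > 0 := lt_of_lt_of_le h3 h23
  have hl1 : l1 > 0 := lt_of_lt_of_le hl2 h12
  have hσpos : σ1 > 0 := by rw [hσ1]; linarith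
  have h13 : l1 + l3 > 0 := by linarith
  have key : 2 * (l2 + l3) * (l1 + l3) ^ 2 - (4 * l1 * l2 ^ 2 + l1 ^ 2 * l2) ≥ 0 := by
    nlinarith [mul_pos hl2 h3, sq_nonneg (l1 + l3), mul_nonneg h3.le (sq_nonneg (l1 + l3)),
      mul_nonneg (mul_nonneg hl2.le hl1.le) (by linarith : l1 - 4 * l2 ≥ 0)]
  have hF22e : F22 = l1 * l3 * (l1 + l3) / σ1 ^ 2 := by
    rw [hF22, hf, hσ1]
    have h0 : l1 + l2 + l3 ≠ 0 := by positivity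
    field_simp
    ring
  have hF11e : F11 = l2 * l3 * (l2 + l3) / σ1 ^ 2 := by
    rw [hF11, hf, hσ1]
    have h0 : l1 + l2 + l3 ≠ 0 := by positivity
    field_simp
    ring
  rw [ge_iff_le, ← sub_nonneg, hF22e, hF11e, hf]
  have heq : -2 * (l1 * l2 * l3 / σ1) ^ 3 / (l1 * σ1 ^ 4 * (l1 * l3 * (l1 + l3) / σ1 ^ 2) ^ 2) +
      l2 * l3 * (l2 + l3) / σ1 ^ 2 / (l1 * σ1) -
      (l1 * l2 * l3 / σ1) ^ 3 / (2 * l2 * σ1 ^ 4 * (l1 * l3 * (l1 + l3) / σ1 ^ 2) ^ 2) =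
      l2 * l3 * (2 * (l2 + l3) * (l1 + l3) ^ 2 - (4 * l1 * l2 ^ 2 + l1 ^ 2 * l2)) /
        (2 * l1 * (l1 + l3) ^ 2 * σ1 ^ 3) := by
    have h0 : σ1 ≠ 0 := ne_of_gt hσpos
    have h1 : l1 ≠ 0 := ne_of_gt hl1
    have h2 : l2 ≠ 0 := ne_of_gt hl2
    have h4 : l3 ≠ 0 := ne_of_gt h3
    have h5 : l1 + l3 ≠ 0 := ne_of_gt h13
    field_simp
    ring
  rw [heq]
  apply div_nonneg
  · exact mul_nonneg (mul_nonneg hl2.le h3.le) key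
  · positivity
end

section
/- Let λ1 ≥ λ2 ≥ λ3 > 0 with σ1 = λ1+λ2+λ3, f = λ1λ2λ3/σ1, λ2 ≤ λ1/4, and F^{11} = f(1/λ1 − 1/σ1), F^{22} = f(1/λ2 − 1/σ1). Then f³/(2λ2σ1⁴(F^{22})²) ≥ (1/108)·F^{11}/λ1². -/
/-!
Writing `σ₁ = λ₁ + λ₂ + λ₃`, one has `F¹¹ = f (λ₂ + λ₃) / (λ₁ σ₁)` and
`F²² = f (λ₁ + λ₃) / (λ₂ σ₁)`, so the inequality reduces to the polynomial bound
`2 σ₁ (λ₁ + λ₃)² (λ₂ + λ₃) ≤ 108 λ₁³ λ₂`. For `λ₁ ≥ λ₂ ≥ λ₃ > 0` the left side is at most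
`2 · 3λ₁ · (2λ₁)² · 2λ₂ = 48 λ₁³ λ₂`.
-/

section

variable {l1 l2 l3 σ : ℝ}

lemma one_div_sub_one_div_of_eq_add_add_left (hσ : σ = l1 + l2 + l3) (h1 : l1 ≠ 0)
    (hσ0 : σ ≠ 0) : 1 / l1 - 1 / σ = (l2 + l3) / (l1 * σ) := by
  subst hσ
  field_simp
  ring

lemma one_div_sub_one_div_of_eq_add_add_mid (hσ : σ = l1 + l2 + l3) (h2 : l2 ≠ 0)
    (hσ0 : σ ≠ 0) : 1 / l2 - 1 / σ = (l1 + l3) / (l2 * σ) := by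
  subst hσ
  field_simp
  ring

lemma two_mul_add_add_mul_sq_mul_le (h12 : l2 ≤ l1) (h23 : l3 ≤ l2) (h3 : 0 < l3) :
    2 * (l1 + l2 + l3) * (l1 + l3) ^ 2 * (l2 + l3) ≤ 48 * l1 ^ 3 * l2 := by
  have h1 : 0 < l1 := by linarith
  calc 2 * (l1 + l2 + l3) * (l1 + l3) ^ 2 * (l2 + l3)
      ≤ 2 * (3 * l1) * (2 * l1) ^ 2 * (2 * l2) := by gcongr <;> linarith
    _ = 48 * l1 ^ 3 * l2 := by ring

end

theorem caseA_final_estimate_general (l1 l2 l3 σ1 f F11 F22 : ℝ)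
    (h12 : l1 ≥ l2) (h23 : l2 ≥ l3) (h3 : l3 > 0)
    (hσ1 : σ1 = l1 + l2 + l3) (hf : f = l1 * l2 * l3 / σ1)
    (hF11 : F11 = f * (1 / l1 - 1 / σ1)) (hF22 : F22 = f * (1 / l2 - 1 / σ1)) :
    f ^ 3 / (2 * l2 * σ1 ^ 4 * F22 ^ 2) ≥ (1 / 108) * (F11 / l1 ^ 2) := by
  have h2 : 0 < l2 := h3.trans_le h23
  have h1 : 0 < l1 := h2.trans_le h12
  have hs : 0 < σ1 := by rw [hσ1]; positivity
  have hf_pos : 0 < f := by rw [hf]; positivity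
  rw [one_div_sub_one_div_of_eq_add_add_left hσ1 h1.ne' hs.ne'] at hF11
  rw [one_div_sub_one_div_of_eq_add_add_mid hσ1 h2.ne' hs.ne'] at hF22
  have hpoly : 2 * σ1 * (l1 + l3) ^ 2 * (l2 + l3) ≤ 108 * l1 ^ 3 * l2 := by
    have := hσ1 ▸ two_mul_add_add_mul_sq_mul_le h12 h23 h3
    linarith [mul_pos (pow_pos h1 3) h2]
  calc (1 / 108) * (F11 / l1 ^ 2) = f * (l2 + l3) / (108 * l1 ^ 3 * σ1) := by
        rw [hF11]; field_simp
    _ ≤ f * l2 / (2 * σ1 ^ 2 * (l1 + l3) ^ 2) := by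
        rw [div_le_div_iff₀ (by positivity) (by positivity)]
        linarith [mul_le_mul_of_nonneg_left hpoly (mul_pos hf_pos hs).le]
    _ = f ^ 3 / (2 * l2 * σ1 ^ 4 * F22 ^ 2) := by
        rw [hF22]; field_simp

theorem caseA_final_estimate (l1 l2 l3 σ1 f F11 F22 : ℝ)
    (h12 : l1 ≥ l2) (h23 : l2 ≥ l3) (h3 : l3 > 0)
    (hσ1 : σ1 = l1 + l2 + l3) (hf : f = l1 * l2 * l3 / σ1)
    (hcase : l2 ≤ l1 / 4)
    (hF11 : F11 = f * (1 / l1 - 1 / σ1)) (hF22 : F22 = f * (1 / l2 - 1 / σ1)) :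
    f ^ 3 / (2 * l2 * σ1 ^ 4 * F22 ^ 2) ≥ (1 / 108) * (F11 / l1 ^ 2) :=
  caseA_final_estimate_general l1 l2 l3 σ1 f F11 F22 h12 h23 h3 hσ1 hf hF11 hF22
end

section
/- Let λ1 ≥ λ2 ≥ λ3 > 0 with σ1 = λ1+λ2+λ3, f = λ1λ2λ3/σ1, and assume λ2 ≥ √(f/3). Define F^{22} = f(1/λ2 − 1/σ1) and F^{33} = f(1/λ3 − 1/σ1). Then 2F^{33}/λ1² − f²/(2σ1⁴F^{22}) ≥ 0. -/
/-! Since `σ1 ≥ 2 λ3` and `σ1 - λ2 ≥ λ1`, one has `F33 ≥ f / (2 λ3)` and `F22 ≥ f λ1 / (λ2 σ1)`.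
With these bounds, and then `f = λ1 λ2 λ3 / σ1`, the claim reduces to `λ1 λ2 λ3 ≤ 2 σ1 ^ 3`. -/

section

variable {K : Type*} [Field K] [LinearOrder K] [IsStrictOrderedRing K] {a b c : K}

lemma div_mul_le_one_div_sub_one_div (hb : 0 < b) (hc : 0 < c) (ha : a ≤ c - b) :
    a / (b * c) ≤ 1 / b - 1 / c := by
  rw [one_div, one_div, inv_sub_inv hb.ne' hc.ne']
  gcongr

lemma mul_mul_le_add_add_pow_three (ha : 0 ≤ a) (hb : 0 ≤ b) (hc : 0 ≤ c) :
    a * b * c ≤ (a + b + c) ^ 3 := by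
  rw [pow_three, ← mul_assoc]
  gcongr <;> linarith

end

theorem caseA_u331_coefficient_general (l1 l2 l3 σ1 f F22 F33 : ℝ)
    (h12 : l1 ≥ l2) (h23 : l2 ≥ l3) (h3 : l3 > 0)
    (hσ1 : σ1 = l1 + l2 + l3) (hf : f = l1 * l2 * l3 / σ1)
    (hF22 : F22 = f * (1 / l2 - 1 / σ1)) (hF33 : F33 = f * (1 / l3 - 1 / σ1)) :
    2 * F33 / l1 ^ 2 - f ^ 2 / (2 * σ1 ^ 4 * F22) ≥ 0 := by
  have hl2 : 0 < l2 := h3.trans_le h23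
  have hl1 : 0 < l1 := hl2.trans_le h12
  have hσ : 0 < σ1 := by linarith
  have hfpos : 0 < f := by rw [hf]; positivity
  have hF33_ge : f / (2 * l3) ≤ F33 := by
    have half : σ1 / 2 / (l3 * σ1) = 1 / (2 * l3) := by field_simp
    rw [hF33, ← mul_one_div, ← half]
    exact mul_le_mul_of_nonneg_left
      (div_mul_le_one_div_sub_one_div h3 hσ (by linarith)) hfpos.le
  have hF22_ge : f * l1 / (l2 * σ1) ≤ F22 := by
    rw [hF22, mul_div_assoc]
    exact mul_le_mul_of_nonneg_left (div_mul_le_one_div_sub_one_div hl2 hσ (by linarith)) hfpos.le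
  have key : f ^ 2 / (2 * σ1 ^ 4 * (f * l1 / (l2 * σ1))) ≤ 2 * (f / (2 * l3)) / l1 ^ 2 := by
    have cube := mul_mul_le_add_add_pow_three hl1.le hl2.le h3.le
    rw [← hσ1] at cube
    rw [hf]
    field_simp
    linarith [pow_pos hσ 3]
  rw [ge_iff_le, sub_nonneg]
  calc f ^ 2 / (2 * σ1 ^ 4 * F22) ≤ f ^ 2 / (2 * σ1 ^ 4 * (f * l1 / (l2 * σ1))) := by
        gcongr
    _ ≤ 2 * (f / (2 * l3)) / l1 ^ 2 := key
    _ ≤ 2 * F33 / l1 ^ 2 := by gcongr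

theorem caseA_u331_coefficient (l1 l2 l3 σ1 f F22 F33 : ℝ)
    (h12 : l1 ≥ l2) (h23 : l2 ≥ l3) (h3 : l3 > 0)
    (hσ1 : σ1 = l1 + l2 + l3) (hf : f = l1 * l2 * l3 / σ1)
    (hl2 : l2 ≥ Real.sqrt (f / 3))
    (hF22 : F22 = f * (1 / l2 - 1 / σ1)) (hF33 : F33 = f * (1 / l3 - 1 / σ1)) :
    2 * F33 / l1 ^ 2 - f ^ 2 / (2 * σ1 ^ 4 * F22) ≥ 0 :=
  caseA_u331_coefficient_general l1 l2 l3 σ1 f F22 F33 h12 h23 h3 hσ1 hf hF22 hF33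
end

section
/- Let λ1 ≥ λ2 ≥ λ3 > 0 with σ1 = λ1+λ2+λ3 and f = λ1λ2λ3/σ1. If σ1² ≥ f/2 (which holds whenever λ2 ≥ √(f/3)), then for F^{22} = f(1/λ2−1/σ1) and F^{33} = f(1/λ3−1/σ1): 2F^{33}/λ1² ≥ f²/(σ1⁴F^{22}). -/
/-!
Since `σ₁ - λ₂ = λ₁ + λ₃` and `σ₁ - λ₃ = λ₁ + λ₂`, clearing denominators turns the inequality into
`λ₁² λ₂ λ₃ ≤ 2 σ₁² (λ₁ + λ₃)(λ₁ + λ₂)`, which is the product of `λ₁² ≤ (λ₁ + λ₃)(λ₁ + λ₂)` and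
`λ₂ λ₃ ≤ σ₁²`.
-/

lemma sq_mul_mul_le_two_mul_sq_add_mul {a b c : ℝ} (ha : 0 ≤ a) (hb : 0 ≤ b) (hc : 0 ≤ c) :
    a ^ 2 * (b * c) ≤ 2 * (a + b + c) ^ 2 * ((a + c) * (a + b)) := by
  have h₁ : a ^ 2 ≤ (a + c) * (a + b) := by nlinarith [mul_nonneg hb hc]
  have h₂ : b * c ≤ (a + b + c) ^ 2 := by nlinarith [mul_nonneg ha hb, mul_nonneg ha hc]
  calc a ^ 2 * (b * c) ≤ (a + c) * (a + b) * (a + b + c) ^ 2 :=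
        mul_le_mul h₁ h₂ (mul_nonneg hb hc) (by positivity)
    _ ≤ 2 * (a + b + c) ^ 2 * ((a + c) * (a + b)) := by
        linarith [show 0 ≤ (a + c) * (a + b) * (a + b + c) ^ 2 by positivity]

lemma one_div_sub_one_div_add_add {a b c : ℝ} (hb : 0 < b) (hs : 0 < a + b + c) :
    1 / b - 1 / (a + b + c) = (a + c) / (b * (a + b + c)) := by
  field_simp
  ring

lemma sq_le_two_mul_pow_four_mul_one_div_sub_mul_one_div_sub {a b c : ℝ}
    (ha : 0 < a) (hb : 0 < b) (hc : 0 < c) :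
    a ^ 2 ≤ 2 * (a + b + c) ^ 4 * (1 / b - 1 / (a + b + c)) * (1 / c - 1 / (a + b + c)) := by
  have hs : 0 < a + b + c := by positivity
  rw [one_div_sub_one_div_add_add hb hs, add_right_comm a b c,
    one_div_sub_one_div_add_add hc (by linarith), add_right_comm a c b]
  have key := sq_mul_mul_le_two_mul_sq_add_mul ha.le hb.le hc.le
  calc a ^ 2 = a ^ 2 * (b * c) / (b * c) := by field_simp
    _ ≤ 2 * (a + b + c) ^ 2 * ((a + c) * (a + b)) / (b * c) := by gcongr
    _ = _ := by field_simp

lemma sq_div_pow_four_mul_le_two_mul_div_sq {f σ x y l : ℝ} (hf : 0 < f) (hσ : 0 < σ) (hx : 0 < x)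
    (hl : 0 < l) (h : l ^ 2 ≤ 2 * σ ^ 4 * x * y) :
    f ^ 2 / (σ ^ 4 * (f * x)) ≤ 2 * (f * y) / l ^ 2 := by
  rw [div_le_div_iff₀ (by positivity) (by positivity)]
  calc f ^ 2 * l ^ 2 ≤ f ^ 2 * (2 * σ ^ 4 * x * y) := by gcongr
    _ = 2 * (f * y) * (σ ^ 4 * (f * x)) := by ring

theorem caseB_u331_coefficient_general (l1 l2 l3 σ1 f F22 F33 : ℝ)
    (h12 : l1 ≥ l2) (h23 : l2 ≥ l3) (h3 : l3 > 0)
    (hσ1 : σ1 = l1 + l2 + l3) (hf : f = l1 * l2 * l3 / σ1)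
    (hF22 : F22 = f * (1 / l2 - 1 / σ1)) (hF33 : F33 = f * (1 / l3 - 1 / σ1)) :
    2 * F33 / l1 ^ 2 ≥ f ^ 2 / (σ1 ^ 4 * F22) := by
  have hl2 : 0 < l2 := h3.trans_le h23
  have hl1 : 0 < l1 := hl2.trans_le h12
  have hσ : 0 < σ1 := by rw [hσ1]; positivity
  have hx : 0 < 1 / l2 - 1 / σ1 := by
    rw [hσ1, one_div_sub_one_div_add_add hl2 (hσ1 ▸ hσ)]
    positivity
  subst hF22 hF33
  refine sq_div_pow_four_mul_le_two_mul_div_sq (by rw [hf]; positivity) hσ hx hl1 ?_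
  rw [hσ1]
  exact sq_le_two_mul_pow_four_mul_one_div_sub_mul_one_div_sub hl1 hl2 h3

theorem caseB_u331_coefficient (l1 l2 l3 σ1 f F22 F33 : ℝ)
    (h12 : l1 ≥ l2) (h23 : l2 ≥ l3) (h3 : l3 > 0)
    (hσ1 : σ1 = l1 + l2 + l3) (hf : f = l1 * l2 * l3 / σ1)
    (hσ1sq : σ1 ^ 2 ≥ f / 2)
    (hF22 : F22 = f * (1 / l2 - 1 / σ1)) (hF33 : F33 = f * (1 / l3 - 1 / σ1)) :
    2 * F33 / l1 ^ 2 ≥ f ^ 2 / (σ1 ^ 4 * F22) :=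
  caseB_u331_coefficient_general l1 l2 l3 σ1 f F22 F33 h12 h23 h3 hσ1 hf hF22 hF33
end

section
/- Let λ1 ≥ λ2 ≥ λ3 > 0 with σ1 = λ1+λ2+λ3, f = λ1λ2λ3/σ1, λ2 ≥ λ1/4, and λ1λ2³ ≥ 288f². Define F^{ii} = f(1/λi − 1/σ1). Then −3f³/(4λ1σ1⁴(F^{22})²) − f³/(λ1σ1⁴(F^{33})²) + F^{11}/(λ1σ1) ≥ (f/(λ1σ1⁴))·(λ1λ2/8). -/
set_option maxHeartbeats 4000000 in
theorem caseB_coefficient_estimate (l1 l2 l3 σ1 f F11 F22 F33 : ℝ)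
    (h12 : l1 ≥ l2) (h23 : l2 ≥ l3) (h3 : l3 > 0)
    (hσ1 : σ1 = l1 + l2 + l3) (hf : f = l1 * l2 * l3 / σ1)
    (hcase : l2 ≥ l1 / 4) (hbig : l1 * l2 ^ 3 ≥ 288 * f ^ 2)
    (hF11 : F11 = f * (1 / l1 - 1 / σ1)) (hF22 : F22 = f * (1 / l2 - 1 / σ1))
    (hF33 : F33 = f * (1 / l3 - 1 / σ1)) :
    -3 * f ^ 3 / (4 * l1 * σ1 ^ 4 * F22 ^ 2) - f ^ 3 / (l1 * σ1 ^ 4 * F33 ^ 2)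
        + F11 / (l1 * σ1)
      ≥ f / (l1 * σ1 ^ 4) * (l1 * l2 / 8) := by
  have hb : l2 > 0 := lt_of_lt_of_le h3 h23
  have ha : l1 > 0 := lt_of_lt_of_le hb h12
  have hs : σ1 > 0 := by rw [hσ1]; linarith
  have hf0 : f > 0 := by rw [hf]; positivity
  have hac : l1 + l3 > 0 := by linarith
  have hab : l1 + l2 > 0 := by linarith
  have k22 : 1 / l2 - 1 / σ1 = (l1 + l3) / (l2 * σ1) := by
    field_simp; linarith [hσ1]
  have k33 : 1 / l3 - 1 / σ1 = (l1 + l2) / (l3 * σ1) := by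
    field_simp; linarith [hσ1]
  have k11 : 1 / l1 - 1 / σ1 = (l2 + l3) / (l1 * σ1) := by
    field_simp; linarith [hσ1]
  have quot : -3 * f ^ 3 / (4 * l1 * σ1 ^ 4 * F22 ^ 2) - f ^ 3 / (l1 * σ1 ^ 4 * F33 ^ 2)
        + F11 / (l1 * σ1) - f / (l1 * σ1 ^ 4) * (l1 * l2 / 8)
      = f * (8 * (l2 + l3) * σ1 ^ 2 * (l1 + l3) ^ 2 * (l1 + l2) ^ 2
          - 6 * l1 * l2 ^ 2 * σ1 ^ 2 * (l1 + l2) ^ 2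
          - 8 * l1 * l3 ^ 2 * σ1 ^ 2 * (l1 + l3) ^ 2
          - l1 ^ 2 * l2 * (l1 + l3) ^ 2 * (l1 + l2) ^ 2)
        / (8 * l1 ^ 2 * σ1 ^ 4 * (l1 + l3) ^ 2 * (l1 + l2) ^ 2) := by
    rw [hF11, hF22, hF33, k11, k22, k33]
    field_simp
    ring
  have hbig' : l2 * σ1 ^ 2 ≥ 288 * l1 * l3 ^ 2 := by
    have e : f ^ 2 * σ1 ^ 2 = (l1 * l2 * l3) ^ 2 := by
      rw [hf]; field_simp
    have hpos : (0:ℝ) < l1 * l2 ^ 2 := by positivity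
    have h2 : l1 * l2 ^ 2 * (288 * l1 * l3 ^ 2) ≤ l1 * l2 ^ 2 * (l2 * σ1 ^ 2) := by
      nlinarith [mul_le_mul_of_nonneg_right hbig (sq_nonneg σ1)]
    exact le_of_mul_le_mul_left h2 hpos
  have hs3a : σ1 ≤ 3 * l1 := by rw [hσ1]; linarith
  have hc2 : l3 ^ 2 ≤ l1 * l2 / 32 := by
    have hM : l2 * σ1 ^ 2 ≤ l2 * (9 * l1 ^ 2) := by
      nlinarith [mul_le_mul_of_nonneg_left
        (mul_le_mul hs3a hs3a hs.le (by positivity : (0:ℝ) ≤ 3 * l1)) hb.le]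
    have h288 : 288 * l1 * l3 ^ 2 ≤ 9 * l1 ^ 2 * l2 := by nlinarith
    have := le_of_mul_le_mul_left
      (by nlinarith : l1 * (32 * l3 ^ 2) ≤ l1 * (l1 * l2)) ha
    linarith
  have h1 : (l2 + l3) * σ1 ^ 2 ≥ l1 * (l1 * l2 + 9 / 4 * l2 ^ 2) := by
    rw [hσ1]
    nlinarith [mul_nonneg h3.le (sq_nonneg (l1 + l2 + l3)),
      mul_nonneg (mul_nonneg hb.le hb.le) (by linarith : l2 - l1 / 4 ≥ 0),
      mul_nonneg (mul_nonneg hb.le h3.le) (by linarith : 2 * (l1 + l2) + l3 ≥ 0)]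
  have h2 : l2 ^ 2 * σ1 ^ 2 ≤ 4 * l2 ^ 2 * (l1 + l3) ^ 2 := by
    nlinarith [mul_nonneg (mul_nonneg (sq_nonneg l2)
        (by rw [hσ1]; linarith : 2 * (l1 + l3) - σ1 ≥ 0))
      (by linarith : 2 * (l1 + l3) + σ1 ≥ 0)]
  have h3' : l3 ^ 2 * σ1 ^ 2 ≤ 9 / 4 * l3 ^ 2 * (l1 + l2) ^ 2 := by
    nlinarith [mul_nonneg (mul_nonneg (sq_nonneg l3)
        (by rw [hσ1]; linarith : 3 / 2 * (l1 + l2) - σ1 ≥ 0))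
      (by linarith : 3 / 2 * (l1 + l2) + σ1 ≥ 0)]
  have p1 : (0:ℝ) < (l1 + l3) ^ 2 * (l1 + l2) ^ 2 := by positivity
  have hnum : 8 * (l2 + l3) * σ1 ^ 2 * (l1 + l3) ^ 2 * (l1 + l2) ^ 2
          - 6 * l1 * l2 ^ 2 * σ1 ^ 2 * (l1 + l2) ^ 2
          - 8 * l1 * l3 ^ 2 * σ1 ^ 2 * (l1 + l3) ^ 2
          - l1 ^ 2 * l2 * (l1 + l3) ^ 2 * (l1 + l2) ^ 2 ≥ 0 := by
    have A := mul_le_mul_of_nonneg_right h1 p1.le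
    have B := mul_le_mul_of_nonneg_left
      (mul_le_mul_of_nonneg_right h2 (sq_nonneg (l1 + l2)))
      (by positivity : (0:ℝ) ≤ 6 * l1)
    have C := mul_le_mul_of_nonneg_left
      (mul_le_mul_of_nonneg_right h3' (sq_nonneg (l1 + l3)))
      (by positivity : (0:ℝ) ≤ 8 * l1)
    have C2 : 8 * l1 * (9 / 4 * l3 ^ 2 * (l1 + l2) ^ 2 * (l1 + l3) ^ 2)
        ≤ 8 * l1 * (9 / 4 * (l1 * l2 / 32) * (l1 + l2) ^ 2 * (l1 + l3) ^ 2) := by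
      have h := mul_le_mul_of_nonneg_right hc2
        (by positivity : (0:ℝ) ≤ (l1 + l2) ^ 2 * (l1 + l3) ^ 2)
      nlinarith [mul_le_mul_of_nonneg_left h (by positivity : (0:ℝ) ≤ 18 * l1)]
    have D : 8 * (l1 * (l1 * l2 + 9 / 4 * l2 ^ 2)) - 6 * l1 * (4 * l2 ^ 2)
          - 8 * l1 * (9 / 4 * (l1 * l2 / 32)) - l1 ^ 2 * l2 ≥ 0 := by
      nlinarith [mul_nonneg (mul_nonneg ha.le hb.le)
        (by linarith : 103 / 16 * l1 - 6 * l2 ≥ 0)]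
    nlinarith [mul_le_mul_of_nonneg_right D p1.le, A, B, C, C2]
  have hq : f * (8 * (l2 + l3) * σ1 ^ 2 * (l1 + l3) ^ 2 * (l1 + l2) ^ 2
          - 6 * l1 * l2 ^ 2 * σ1 ^ 2 * (l1 + l2) ^ 2
          - 8 * l1 * l3 ^ 2 * σ1 ^ 2 * (l1 + l3) ^ 2
          - l1 ^ 2 * l2 * (l1 + l3) ^ 2 * (l1 + l2) ^ 2)
        / (8 * l1 ^ 2 * σ1 ^ 4 * (l1 + l3) ^ 2 * (l1 + l2) ^ 2) ≥ 0 := by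
    apply div_nonneg (mul_nonneg hf0.le hnum) (by positivity)
  linarith [quot, hq]
end

section
/- Let λ1 = λ2 > λ3 > 0 with σ1 = 2λ1+λ3, f = λ1²λ3/σ1, and suppose λ1⁴ ≥ 8f². Define F^{11} = f(1/λ1−1/σ1) and F^{33} = f(1/λ3−1/σ1). Then f³/(λ1σ1⁴(F^{33})²) ≤ F^{11}/(2λ1σ1). -/
/-! With `σ₁ = 2λ₁ + λ₃` both coefficients are explicit, `F³³ = 2λ₁ f / (λ₃ σ₁)` and
`F¹¹ = (λ₁ + λ₃) f / (λ₁ σ₁)`, so the two sides are `f/(2λ₁²σ₁²)` times `λ₃² / (2λ₁)` and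
`λ₁ + λ₃` respectively, and `λ₃² ≤ λ₁² ≤ 2λ₁(λ₁ + λ₃)`. -/

section

variable {a b s : ℝ}

lemma one_div_sub_one_div_of_eq_two_mul_add_left (hb : b ≠ 0) (hs : s ≠ 0)
    (hsab : s = 2 * a + b) : 1 / b - 1 / s = 2 * a / (b * s) := by
  rw [one_div, one_div, inv_sub_inv hb hs, hsab]
  ring

lemma one_div_sub_one_div_of_eq_two_mul_add_right (ha : a ≠ 0) (hs : s ≠ 0)
    (hsab : s = 2 * a + b) : 1 / a - 1 / s = (a + b) / (a * s) := by
  rw [one_div, one_div, inv_sub_inv ha hs, hsab]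
  ring

lemma sq_div_two_mul_le_add (ha : 0 < a) (hb : 0 ≤ b) (hba : b ≤ a) :
    b ^ 2 / (2 * a) ≤ a + b := by
  rw [div_le_iff₀ (by positivity)]
  nlinarith

end

theorem multiplicity_two_estimate_general (l1 l3 σ1 f F11 F33 : ℝ)
    (h13 : l1 > l3) (h3 : l3 > 0)
    (hσ1 : σ1 = 2 * l1 + l3) (hf : f = l1 ^ 2 * l3 / σ1)
    (hF11 : F11 = f * (1 / l1 - 1 / σ1)) (hF33 : F33 = f * (1 / l3 - 1 / σ1)) :
    f ^ 3 / (l1 * σ1 ^ 4 * F33 ^ 2) ≤ F11 / (2 * l1 * σ1) := by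
  have hl1 : 0 < l1 := h3.trans h13
  have hσ : 0 < σ1 := by rw [hσ1]; positivity
  have hf0 : 0 ≤ f := hf ▸ by positivity
  rw [hF33, hF11, one_div_sub_one_div_of_eq_two_mul_add_left h3.ne' hσ.ne' hσ1,
    one_div_sub_one_div_of_eq_two_mul_add_right hl1.ne' hσ.ne' hσ1]
  calc f ^ 3 / (l1 * σ1 ^ 4 * (f * (2 * l1 / (l3 * σ1))) ^ 2)
      = f / (2 * l1 ^ 2 * σ1 ^ 2) * (l3 ^ 2 / (2 * l1)) := by
        rcases hf0.eq_or_lt with rfl | hfpos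
        · simp
        · field_simp
    _ ≤ f / (2 * l1 ^ 2 * σ1 ^ 2) * (l1 + l3) := by
        gcongr
        exact sq_div_two_mul_le_add hl1 h3.le h13.le
    _ = f * ((l1 + l3) / (l1 * σ1)) / (2 * l1 * σ1) := by
        field_simp

theorem multiplicity_two_estimate (l1 l3 σ1 f F11 F33 : ℝ)
    (h13 : l1 > l3) (h3 : l3 > 0)
    (hσ1 : σ1 = 2 * l1 + l3) (hf : f = l1 ^ 2 * l3 / σ1)
    (hbig : l1 ^ 4 ≥ 8 * f ^ 2)
    (hF11 : F11 = f * (1 / l1 - 1 / σ1)) (hF33 : F33 = f * (1 / l3 - 1 / σ1)) :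
    f ^ 3 / (l1 * σ1 ^ 4 * F33 ^ 2) ≤ F11 / (2 * l1 * σ1) :=
  multiplicity_two_estimate_general l1 l3 σ1 f F11 F33 h13 h3 hσ1 hf hF11 hF33
end

section
/- Let λ1 ≥ λ2 ≥ λ3 > 0 with σ1 = λ1+λ2+λ3, σ3 = λ1λ2λ3, f = σ3/σ1, and K ≥ 1. Define G^{11} = f(λ2+λ3)/(λ1σ1)·(K+λ1)², G^{22} = f(λ1+λ3)/(λ2σ1)·(K+λ2)², G^{33} = (λ1λ2(λ1+λ2)/σ1²)·(K+λ3)². Then there exists a constant C > 0 depending only on K, an upper bound for f, and a lower bound for f, such that C⁻¹λ2 ≤ G^{ii} ≤ Cλ2 for i = 1, 2, 3. -/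
set_option maxHeartbeats 1000000 in
theorem G_uniform_ellipticity (K flo fhi : ℝ) (hK : K ≥ 1) (hflo : flo > 0)
    (hlofhi : flo ≤ fhi) :
    ∃ C > 0, ∀ l1 l2 l3 σ1 σ3 f G11 G22 G33 : ℝ,
      l1 ≥ l2 → l2 ≥ l3 → l3 > 0 →
      σ1 = l1 + l2 + l3 → σ3 = l1 * l2 * l3 → f = σ3 / σ1 →
      flo ≤ f → f ≤ fhi →
      G11 = f * (l2 + l3) / (l1 * σ1) * (K + l1) ^ 2 →
      G22 = f * (l1 + l3) / (l2 * σ1) * (K + l2) ^ 2 →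
      G33 = l1 * l2 * (l1 + l2) / σ1 ^ 2 * (K + l3) ^ 2 →
      (C⁻¹ * l2 ≤ G11 ∧ G11 ≤ C * l2) ∧
      (C⁻¹ * l2 ≤ G22 ∧ G22 ≤ C * l2) ∧
      (C⁻¹ * l2 ≤ G33 ∧ G33 ≤ C * l2) := by
  have hfhi : (0:ℝ) < fhi := lt_of_lt_of_le hflo hlofhi
  have hK0 : (0:ℝ) < K := lt_of_lt_of_le one_pos hK
  obtain ⟨m, hmdef⟩ : ∃ m : ℝ, m = Real.sqrt flo := ⟨_, rfl⟩
  have hm : 0 < m := hmdef ▸ Real.sqrt_pos.mpr hflo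
  have hm2 : m ^ 2 = flo := hmdef ▸ Real.sq_sqrt hflo.le
  obtain ⟨s, hsdef⟩ : ∃ s : ℝ, s = Real.sqrt (3 * fhi) := ⟨_, rfl⟩
  have hs0 : 0 ≤ s := hsdef ▸ Real.sqrt_nonneg _
  have hs2 : s ^ 2 = 3 * fhi := hsdef ▸ Real.sq_sqrt (by positivity)
  obtain ⟨C, hCdef⟩ : ∃ C : ℝ,
      C = 3/flo + 9 + 2*fhi*(1+K/m)^2 + fhi*(1+K/m)^2 + (K+s)^2 := ⟨_, rfl⟩
  have hKm : (0:ℝ) < 1 + K/m := by positivity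
  have hCpos : 0 < C := by rw [hCdef]; positivity
  have r1 : (0:ℝ) ≤ 2*fhi*(1+K/m)^2 := by positivity
  have r2 : (0:ℝ) ≤ fhi*(1+K/m)^2 := by positivity
  have r3 : (0:ℝ) ≤ (K+s)^2 := by positivity
  have r4 : (0:ℝ) < 3/flo := by positivity
  have hCinv1 : C⁻¹ ≤ flo/3 := by
    have h1 : 3/flo ≤ C := by rw [hCdef]; linarith only [r1, r2, r3]
    calc C⁻¹ ≤ (3/flo)⁻¹ := inv_anti₀ r4 h1
      _ = flo/3 := by rw [inv_div]
  have hCinv2 : C⁻¹ ≤ 1/9 := by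
    have h1 : (9:ℝ) ≤ C := by rw [hCdef]; linarith only [r1, r2, r3, r4]
    calc C⁻¹ ≤ (9:ℝ)⁻¹ := inv_anti₀ (by norm_num) h1
      _ = 1/9 := by norm_num
  have hCU1 : 2*fhi*(1+K/m)^2 ≤ C := by rw [hCdef]; linarith only [r2, r3, r4]
  have hCU2 : fhi*(1+K/m)^2 ≤ C := by rw [hCdef]; linarith only [r1, r3, r4]
  have hCU3 : (K+s)^2 ≤ C := by rw [hCdef]; linarith only [r1, r2, r4]
  clear hCdef hmdef hsdef r1 r2 r3 r4
  refine ⟨C, hCpos, ?_⟩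
  intro l1 l2 l3 σ1 σ3 f G11 G22 G33 h12 h23 h3 hσ1 hσ3 hf hfl hfh hG11 hG22 hG33
  subst hσ1 hσ3 hG11 hG22 hG33
  have hl2 : 0 < l2 := lt_of_lt_of_le h3 h23
  have hl1 : 0 < l1 := lt_of_lt_of_le hl2 h12
  have hl1' : (0:ℝ) ≤ l1 := hl1.le
  have hl2' : (0:ℝ) ≤ l2 := hl2.le
  have hl3' : (0:ℝ) ≤ l3 := h3.le
  have hσ : (0:ℝ) < l1 + l2 + l3 := by linarith only [hl1, hl2, h3]
  have hf0 : 0 < f := lt_of_lt_of_le hflo hfl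
  have hfσ : f * (l1 + l2 + l3) = l1 * l2 * l3 := by
    rw [hf]; field_simp
  have hfub : f ≤ l2 * l3 := by
    have key : f * (l1 + l2 + l3) ≤ l2 * l3 * (l1 + l2 + l3) := by
      rw [hfσ]
      have h9 : 0 ≤ l2 * l3 * (l2 + l3) :=
        mul_nonneg (mul_nonneg hl2' hl3') (by linarith only [hl2, h3])
      linarith only [h9]
    exact le_of_mul_le_mul_right key hσ
  have hflb : l2 * l3 ≤ 3 * f := by
    have key : l2 * l3 * (l1 + l2 + l3) ≤ 3 * f * (l1 + l2 + l3) := by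
      have h9 : 0 ≤ l2 * l3 * (2 * l1 - l2 - l3) :=
        mul_nonneg (mul_nonneg hl2' hl3') (by linarith only [h12, h23])
      linarith only [hfσ, h9]
    exact le_of_mul_le_mul_right key hσ
  have h2m : m ≤ l2 := by
    have h : flo ≤ l2 ^ 2 := by
      linarith only [hfl, hfub, mul_le_mul_of_nonneg_left h23 hl2']
    have := Real.sqrt_le_sqrt h
    rwa [← hm2, Real.sqrt_sq hm.le, Real.sqrt_sq hl2'] at this
  have h1m : m ≤ l1 := le_trans h2m h12
  have h3s : l3 ≤ s := by
    have h : l3 ^ 2 ≤ 3 * fhi := by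
      linarith only [hflb, hfh, mul_le_mul_of_nonneg_right h23 hl3']
    have := Real.sqrt_le_sqrt h
    rwa [← hs2, Real.sqrt_sq hl3', Real.sqrt_sq hs0] at this
  have hKl1 : K + l1 ≤ (1 + K/m) * l1 := by
    have h : K ≤ K/m * l1 := by
      rw [div_mul_eq_mul_div, le_div_iff₀ hm]
      exact mul_le_mul_of_nonneg_left h1m hK0.le
    nlinarith [h]
  have hKl2 : K + l2 ≤ (1 + K/m) * l2 := by
    have h : K ≤ K/m * l2 := by
      rw [div_mul_eq_mul_div, le_div_iff₀ hm]
      exact mul_le_mul_of_nonneg_left h2m hK0.le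
    nlinarith [h]
  clear hfσ hfub hflb h2m h1m hf hm2 hs2 hlofhi
  refine ⟨⟨?_, ?_⟩, ⟨?_, ?_⟩, ⟨?_, ?_⟩⟩
  · -- G11 lower
    rw [div_mul_eq_mul_div, le_div_iff₀ (by positivity)]
    calc C⁻¹ * l2 * (l1 * (l1 + l2 + l3))
        ≤ flo/3 * l2 * (l1 * (l1 + l2 + l3)) := by
          apply mul_le_mul_of_nonneg_right _ (by positivity)
          exact mul_le_mul_of_nonneg_right hCinv1 hl2'
      _ ≤ flo/3 * l2 * (l1 * (3 * l1)) := by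
          apply mul_le_mul_of_nonneg_left _ (by positivity)
          apply mul_le_mul_of_nonneg_left _ hl1'
          linarith only [h12, h23]
      _ = flo * (l2 * l1 ^ 2) := by ring
      _ ≤ f * ((l2 + l3) * (K + l1) ^ 2) := by
          apply mul_le_mul hfl _ (by positivity) hf0.le
          apply mul_le_mul (by linarith only [h3]) _ (by positivity) (by linarith only [hl2, h3])
          exact pow_le_pow_left₀ hl1' (by linarith only [hK0]) 2
      _ = f * (l2 + l3) * (K + l1) ^ 2 := by ring
  · -- G11 upper
    rw [div_mul_eq_mul_div, div_le_iff₀ (by positivity)]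
    calc f * (l2 + l3) * (K + l1) ^ 2
        ≤ fhi * (2 * l2) * ((1 + K/m) * l1) ^ 2 := by
          apply mul_le_mul _ (pow_le_pow_left₀ (by linarith only [hK0, hl1]) hKl1 2)
            (by positivity) (by positivity)
          exact mul_le_mul hfh (by linarith only [h23]) (by linarith only [hl2, h3]) hfhi.le
      _ = 2*fhi*(1+K/m)^2 * (l2 * l1 ^ 2) := by ring
      _ ≤ C * (l2 * l1 ^ 2) := mul_le_mul_of_nonneg_right hCU1 (by positivity)
      _ ≤ C * (l2 * (l1 * (l1 + l2 + l3))) := by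
          apply mul_le_mul_of_nonneg_left _ hCpos.le
          apply mul_le_mul_of_nonneg_left _ hl2'
          nlinarith [mul_le_mul_of_nonneg_left (by linarith only [hl2, h3] : l1 ≤ l1 + l2 + l3) hl1']
      _ = C * l2 * (l1 * (l1 + l2 + l3)) := by ring
  · -- G22 lower
    rw [div_mul_eq_mul_div, le_div_iff₀ (by positivity)]
    calc C⁻¹ * l2 * (l2 * (l1 + l2 + l3))
        ≤ flo/3 * l2 * (l2 * (l1 + l2 + l3)) := by
          apply mul_le_mul_of_nonneg_right _ (by positivity)
          exact mul_le_mul_of_nonneg_right hCinv1 hl2'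
      _ = flo * ((l1 + l2 + l3)/3 * l2 ^ 2) := by ring
      _ ≤ f * ((l1 + l3) * (K + l2) ^ 2) := by
          apply mul_le_mul hfl _ (by positivity) hf0.le
          apply mul_le_mul (by linarith only [h12, h3, hl2]) _ (by positivity) (by linarith only [hl1, h3])
          exact pow_le_pow_left₀ hl2' (by linarith only [hK0]) 2
      _ = f * (l1 + l3) * (K + l2) ^ 2 := by ring
  · -- G22 upper
    rw [div_mul_eq_mul_div, div_le_iff₀ (by positivity)]
    calc f * (l1 + l3) * (K + l2) ^ 2
        ≤ fhi * (l1 + l2 + l3) * ((1 + K/m) * l2) ^ 2 := by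
          apply mul_le_mul _ (pow_le_pow_left₀ (by linarith only [hK0, hl2]) hKl2 2)
            (by positivity) (by positivity)
          exact mul_le_mul hfh (by linarith only [hl2]) (by linarith only [hl1, h3]) hfhi.le
      _ = fhi*(1+K/m)^2 * (l2 * (l2 * (l1 + l2 + l3))) := by ring
      _ ≤ C * (l2 * (l2 * (l1 + l2 + l3))) := mul_le_mul_of_nonneg_right hCU2 (by positivity)
      _ = C * l2 * (l2 * (l1 + l2 + l3)) := by ring
  · -- G33 lower
    rw [div_mul_eq_mul_div, le_div_iff₀ (by positivity)]
    have hKl3 : (1:ℝ) ≤ (K + l3) ^ 2 := by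
      have h1 : (1:ℝ) ≤ K + l3 := by linarith only [hK, h3]
      nlinarith [h1]
    calc C⁻¹ * l2 * (l1 + l2 + l3) ^ 2
        ≤ 1/9 * l2 * (l1 + l2 + l3) ^ 2 := by
          apply mul_le_mul_of_nonneg_right _ (by positivity)
          exact mul_le_mul_of_nonneg_right hCinv2 hl2'
      _ ≤ 1/9 * l2 * (3 * l1) ^ 2 := by
          apply mul_le_mul_of_nonneg_left _ (by positivity)
          exact pow_le_pow_left₀ (by positivity) (by linarith only [h12, h23]) 2
      _ = l1 * l2 * l1 * 1 := by ring
      _ ≤ l1 * l2 * (l1 + l2) * (K + l3) ^ 2 := by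
          apply mul_le_mul _ hKl3 (by norm_num) (by positivity)
          apply mul_le_mul_of_nonneg_left _ (by positivity)
          linarith only [hl2]
  · -- G33 upper
    rw [div_mul_eq_mul_div, div_le_iff₀ (by positivity)]
    calc l1 * l2 * (l1 + l2) * (K + l3) ^ 2
        ≤ (l1 + l2 + l3) * l2 * (l1 + l2 + l3)
            * (K + s) ^ 2 := by
          apply mul_le_mul _ (pow_le_pow_left₀ (by linarith only [hK0, h3]) (by linarith only [h3s]) 2)
            (by positivity) (by positivity)
          apply mul_le_mul _ (by linarith only [h3]) (by linarith only [hl1, hl2]) (by positivity)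
          exact mul_le_mul_of_nonneg_right (by linarith only [hl2, h3]) hl2'
      _ = (K+s)^2 * (l2 * (l1 + l2 + l3) ^ 2) := by ring
      _ ≤ C * (l2 * (l1 + l2 + l3) ^ 2) := mul_le_mul_of_nonneg_right hCU3 (by positivity)
      _ = C * l2 * (l1 + l2 + l3) ^ 2 := by ring
end

section
/- Let λ1 ≥ λ2 ≥ λ3 > 0 with σ1 = λ1+λ2+λ3, σ3 = λ1λ2λ3, f = σ3/σ1, and H^{11} = σ3/λ1 − f = f(λ2+λ3)/λ1. If f ≥ f₀ > 0 for some constant f₀, then 1/H^{11} = λ1/(f(λ2+λ3)) ≤ λ1·(√3)/(2f₀·√(f/3)) ≤ C(f₀)·λ1 for a constant C depending only on f₀. -/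
theorem H11_reciprocal_bound (f0 : ℝ) (hf0 : f0 > 0) :
    ∃ C > 0, ∀ l1 l2 l3 σ1 σ3 f : ℝ,
      l1 ≥ l2 → l2 ≥ l3 → l3 > 0 →
      σ1 = l1 + l2 + l3 → σ3 = l1 * l2 * l3 → f = σ3 / σ1 → f ≥ f0 →
      1 / (σ3 / l1 - f) = l1 / (f * (l2 + l3)) ∧
      l1 / (f * (l2 + l3)) ≤ l1 * Real.sqrt 3 / (2 * f0 * Real.sqrt (f / 3)) ∧
      l1 * Real.sqrt 3 / (2 * f0 * Real.sqrt (f / 3)) ≤ C * l1 := by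
  have hC0 : Real.sqrt 3 / (2 * f0 * Real.sqrt (f0 / 3)) > 0 := by
    apply div_pos (Real.sqrt_pos.mpr (by norm_num))
    positivity
  refine ⟨Real.sqrt 3 / (2 * f0 * Real.sqrt (f0 / 3)), hC0, ?_⟩
  intro l1 l2 l3 σ1 σ3 f h12 h23 h3 hσ1 hσ3 hfdef hff0
  have h2 : l2 > 0 := lt_of_lt_of_le h3 h23
  have h1 : l1 > 0 := lt_of_lt_of_le h2 h12
  have hσ1pos : σ1 > 0 := by rw [hσ1]; linarith
  have hfpos : f > 0 := lt_of_lt_of_le hf0 hff0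
  -- √f ≤ l2
  have hfle : f ≤ l2 ^ 2 := by
    rw [hfdef, hσ3, div_le_iff₀ hσ1pos, hσ1]
    nlinarith [mul_le_mul_of_nonneg_left h23 (mul_pos h1 h2).le, mul_pos h2 h3, sq_nonneg l2]
  have hs : Real.sqrt f ≤ l2 := by
    calc Real.sqrt f ≤ Real.sqrt (l2 ^ 2) := Real.sqrt_le_sqrt hfle
    _ = l2 := Real.sqrt_sq h2.le
  have hspos : Real.sqrt f > 0 := Real.sqrt_pos.mpr hfpos
  have htpos : Real.sqrt 3 > 0 := Real.sqrt_pos.mpr (by norm_num)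
  have ht2 : Real.sqrt 3 ^ 2 = 3 := Real.sq_sqrt (by norm_num)
  have hdiv : Real.sqrt (f / 3) = Real.sqrt f / Real.sqrt 3 :=
    Real.sqrt_div hfpos.le 3
  have hApos : f * (l2 + l3) > 0 := by positivity
  have hBpos : 2 * f0 * Real.sqrt (f / 3) > 0 := by positivity
  refine ⟨?_, ?_, ?_⟩
  · have key : σ3 / l1 - f = f * (l2 + l3) / l1 := by
      rw [hfdef, hσ3, hσ1]
      field_simp
      ring
    rw [key, one_div_div]
  · rw [div_le_div_iff₀ hApos hBpos, hdiv]
    rw [div_eq_mul_inv]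
    have hinv : Real.sqrt 3 * (Real.sqrt 3)⁻¹ = 1 := mul_inv_cancel₀ (ne_of_gt htpos)
    nlinarith [mul_pos h1 hspos, mul_pos (mul_pos h1 hfpos) h3,
      mul_le_mul hff0 hs hspos.le hfpos.le,
      mul_le_mul_of_nonneg_left (mul_le_mul hff0 hs hspos.le hfpos.le) h1.le,
      mul_pos (mul_pos h1 hfpos) h2, sq_nonneg (Real.sqrt 3)]
  · have hmono : Real.sqrt (f0 / 3) ≤ Real.sqrt (f / 3) :=
      Real.sqrt_le_sqrt (by linarith)
    have hB0pos : 2 * f0 * Real.sqrt (f0 / 3) > 0 := by positivity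
    have : l1 * Real.sqrt 3 / (2 * f0 * Real.sqrt (f / 3)) ≤
        l1 * Real.sqrt 3 / (2 * f0 * Real.sqrt (f0 / 3)) := by
      gcongr
    calc l1 * Real.sqrt 3 / (2 * f0 * Real.sqrt (f / 3)) ≤
        l1 * Real.sqrt 3 / (2 * f0 * Real.sqrt (f0 / 3)) := this
      _ = Real.sqrt 3 / (2 * f0 * Real.sqrt (f0 / 3)) * l1 := by ring
end
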